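/- Let β > 1 be a real number, let U be a nonempty finite set, let S_1,…,S_k be subsets of U whose union is U, with positive real costs c_1,…,c_k, and let l : U → ℤ be a level assignment such that for every i ∈ {1,…,k} and every integer L, the number of elements e ∈ S_i with l(e) ≤ L is at most c_i·β^{L+3}. Then ∑_{e ∈ U} β^{−l(e)} ≤ β³·(ln |U| + 1) · ∑_{i=1}^{k} c_i. -/

import Mathlib

/-!
The weight β^{-l(e)} of an element of rank r in a set, when the set is ordered by level, is at
most C/r as soon as the set has at most C·β^L elements of level ≤ L: at least r elements have
level ≤ l(e). Summing over ranks gives C·H_{|S|} ≤ C·(ln |S| + 1) per set, and since the sets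
cover U, the weight of U is at most the sum of these bounds, with C = c_i·β³.
-/

open Finset

theorem harmonic_monotone : Monotone harmonic :=
  monotone_nat_of_le_succ fun n => by
    rw [harmonic_succ]
    exact le_add_of_nonneg_right (by positivity)

theorem harmonic_le_log_add_one_of_le {m n : ℕ} (h : m ≤ n) :
    (harmonic m : ℝ) ≤ Real.log n + 1 := by
  have hmono : (harmonic m : ℝ) ≤ harmonic n := mod_cast harmonic_monotone h
  linarith [harmonic_le_one_add_log n]

theorem sum_inv_card_filter_le_le_harmonic {α ι : Type*} [LinearOrder ι] (f : α → ι)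
    (T : Finset α) : ∑ a ∈ T, (#(T.filter fun x => f x ≤ f a) : ℝ)⁻¹ ≤ harmonic #T := by
  classical
  induction T using Finset.induction_on_max_value f with
  | empty => simp
  | insert m T hm hmax ih =>
    have rank_max : #((insert m T).filter fun x => f x ≤ f m) = #T + 1 := by
      rw [filter_true_of_mem fun x hx => (mem_insert.1 hx).elim (fun h => h ▸ le_rfl) (hmax x),
        card_insert_of_notMem hm]
    have rank_mono : ∀ a ∈ T, (#((insert m T).filter fun x => f x ≤ f a) : ℝ)⁻¹ ≤
        (#(T.filter fun x => f x ≤ f a) : ℝ)⁻¹ := by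
      intro a ha
      have hpos : 0 < #(T.filter fun x => f x ≤ f a) := card_pos.2 ⟨a, by simp [ha]⟩
      gcongr
      exact subset_insert m T
    rw [sum_insert hm, card_insert_of_notMem hm, harmonic_succ, rank_max]
    push_cast
    linarith [sum_le_sum rank_mono]

theorem sum_zpow_neg_le_mul_harmonic {α : Type*} {β C : ℝ} (hβ : 0 < β) (hC : 0 ≤ C)
    (T : Finset α) (l : α → ℤ)
    (hcount : ∀ L : ℤ, (#(T.filter fun e => l e ≤ L) : ℝ) ≤ C * β ^ L) :
    ∑ e ∈ T, β ^ (-l e) ≤ C * harmonic #T := by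
  have term_le : ∀ e ∈ T, β ^ (-l e) ≤ C * (#(T.filter fun x => l x ≤ l e) : ℝ)⁻¹ := by
    intro e he
    have hpos : (0 : ℝ) < #(T.filter fun x => l x ≤ l e) := by
      exact_mod_cast card_pos.2 ⟨e, by simp [he]⟩
    rw [zpow_neg, ← div_eq_mul_inv, le_div_iff₀ hpos, inv_mul_le_iff₀ (zpow_pos hβ _), mul_comm]
    exact hcount (l e)
  calc ∑ e ∈ T, β ^ (-l e) ≤ ∑ e ∈ T, C * (#(T.filter fun x => l x ≤ l e) : ℝ)⁻¹ :=
        sum_le_sum term_le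
    _ ≤ C * harmonic #T := by
        rw [← mul_sum]; exact mul_le_mul_of_nonneg_left (sum_inv_card_filter_le_le_harmonic l T) hC

theorem sum_le_sum_sum_inter_of_forall_exists_mem {α ι : Type*} [DecidableEq α] {w : α → ℝ}
    (hw : ∀ a, 0 ≤ w a) (U : Finset α) (s : Finset ι) (t : ι → Finset α)
    (hcover : ∀ a ∈ U, ∃ i ∈ s, a ∈ t i) :
    ∑ a ∈ U, w a ≤ ∑ i ∈ s, ∑ a ∈ U ∩ t i, w a := by
  simp_rw [← filter_mem_eq_inter, sum_filter]
  rw [sum_comm]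
  refine sum_le_sum fun a ha => ?_
  obtain ⟨i, hi, hai⟩ := hcover a ha
  calc w a = if a ∈ t i then w a else 0 := (if_pos hai).symm
    _ ≤ ∑ j ∈ s, if a ∈ t j then w a else 0 :=
      single_le_sum (f := fun j => if a ∈ t j then w a else 0)
        (fun j _ => by split_ifs <;> simp [hw]) hi

theorem dual_fitting_bound_general {α : Type*} (β : ℝ) (hβ : 1 < β) (k : ℕ)
    (U : Finset α)
    (S : Fin k → Finset α) (hcover : ∀ e ∈ U, ∃ i, e ∈ S i)
    (c : Fin k → ℝ) (hc : ∀ i, 0 < c i) (l : α → ℤ)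
    (hcount : ∀ i, ∀ L : ℤ,
      ((((S i).filter fun e => l e ≤ L)).card : ℝ) ≤ c i * β ^ (L + 3)) :
    ∑ e ∈ U, β ^ (-(l e)) ≤
      β ^ (3 : ℕ) * (Real.log U.card + 1) * ∑ i, c i := by
  classical
  have hβ0 : 0 < β := zero_lt_one.trans hβ
  have per_set : ∀ i, ∑ e ∈ U ∩ S i, β ^ (-l e) ≤ c i * β ^ 3 * (Real.log #U + 1) := by
    intro i
    have hci := (hc i).le
    have hcount_inter : ∀ L : ℤ,
        (#((U ∩ S i).filter fun e => l e ≤ L) : ℝ) ≤ c i * β ^ 3 * β ^ L := by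
      intro L
      rw [mul_assoc, ← zpow_natCast, ← zpow_add₀ hβ0.ne', add_comm]
      exact le_trans (mod_cast card_le_card (filter_subset_filter _ inter_subset_right))
        (hcount i L)
    calc ∑ e ∈ U ∩ S i, β ^ (-l e) ≤ c i * β ^ 3 * harmonic #(U ∩ S i) :=
          sum_zpow_neg_le_mul_harmonic hβ0 (by positivity) _ l hcount_inter
      _ ≤ c i * β ^ 3 * (Real.log #U + 1) := by
          gcongr
          exact harmonic_le_log_add_one_of_le (card_le_card inter_subset_left)
  calc ∑ e ∈ U, β ^ (-l e) ≤ ∑ i, ∑ e ∈ U ∩ S i, β ^ (-l e) :=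
        sum_le_sum_sum_inter_of_forall_exists_mem (fun e => (zpow_pos hβ0 _).le) U univ S
          (by simpa using hcover)
    _ ≤ ∑ i, c i * β ^ 3 * (Real.log #U + 1) := sum_le_sum fun i _ => per_set i
    _ = β ^ 3 * (Real.log #U + 1) * ∑ i, c i := by
        rw [mul_sum]
        exact sum_congr rfl fun i _ => by ring

/-- Dual-fitting bound (core of Lemma 5.1): if sets S₁,…,S_k with costs c₁,…,c_k
cover the universe U and each set contains at most cᵢ·β^{L+3} elements of level ≤ L,
then the total dual weight of U is at most β³·(ln |U| + 1)·∑ cᵢ. -/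
theorem dual_fitting_bound {α : Type*} (β : ℝ) (hβ : 1 < β) (k : ℕ)
    (U : Finset α) (hU : U.Nonempty)
    (S : Fin k → Finset α) (hsub : ∀ i, S i ⊆ U) (hcover : ∀ e ∈ U, ∃ i, e ∈ S i)
    (c : Fin k → ℝ) (hc : ∀ i, 0 < c i) (l : α → ℤ)
    (hcount : ∀ i, ∀ L : ℤ,
      ((((S i).filter fun e => l e ≤ L)).card : ℝ) ≤ c i * β ^ (L + 3)) :
    ∑ e ∈ U, β ^ (-(l e)) ≤
      β ^ (3 : ℕ) * (Real.log U.card + 1) * ∑ i, c i :=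
  dual_fitting_bound_general β hβ k U S hcover c hc l hcount
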